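/- For 1 ≤ s ≤ m and 1 ≤ k ≤ n, the weighted sum F_{s,k} over Up-Right lattice paths from (m,1) to (s,k) of the product of 1/(x_i+y_j) over visited cells (i,j) is a symmetric function of the variables x_s, x_{s+1}, ..., x_m. -/

import Mathlib

open Finset

noncomputable section

/-- The field of rational functions over `ℚ` in variables `x_1, x_2, …` and `y_1, y_2, …`. -/
abbrev K : Type := FractionRing (MvPolynomial (ℕ ⊕ ℕ) ℚ)

/-- The variable `x_i` as an element of `K`. -/
def X (i : ℕ) : K := algebraMap (MvPolynomial (ℕ ⊕ ℕ) ℚ) K (MvPolynomial.X (Sum.inl i))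

/-- The variable `y_j` as an element of `K`. -/
def Y (j : ℕ) : K := algebraMap (MvPolynomial (ℕ ⊕ ℕ) ℚ) K (MvPolynomial.X (Sum.inr j))

/-- A step of an Up-Right lattice path: `Up` decreases the first (row) coordinate by one,
`Right` increases the second (column) coordinate by one. -/
def Step (c d : ℕ × ℕ) : Prop :=
  (d.1 + 1 = c.1 ∧ d.2 = c.2) ∨ (d.1 = c.1 ∧ d.2 = c.2 + 1)

/-- `p` is an Up-Right lattice path from cell `A` to cell `B` (listed as its sequence of
visited cells, starting at `A` and ending at `B`). -/
def IsPath (A B : ℕ × ℕ) (p : List (ℕ × ℕ)) : Prop :=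
  p.Chain' Step ∧ p.head? = some A ∧ p.getLast? = some B

/-- All cells of `p` lie in the grid `{1,…,m} × {1,…,n}`. -/
def InGrid (m n : ℕ) (p : List (ℕ × ℕ)) : Prop :=
  ∀ c ∈ p, 1 ≤ c.1 ∧ c.1 ≤ m ∧ 1 ≤ c.2 ∧ c.2 ≤ n

/-- The weight of a path: the product of `1/(x_i + y_j)` over all visited cells `(i,j)`. -/
def pathWeight (x y : ℕ → K) (p : List (ℕ × ℕ)) : K :=
  (p.map fun c => (x c.1 + y c.2)⁻¹).prod

/-- The single-path partition function: the sum of weights of all Up-Right lattice paths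
from `A` to `B` inside the grid `{1,…,m} × {1,…,n}`. -/
def F1 (m n : ℕ) (x y : ℕ → K) (A B : ℕ × ℕ) : K :=
  ∑ᶠ p : {p : List (ℕ × ℕ) // IsPath A B p ∧ InGrid m n p}, pathWeight x y p.1

/-- `γ` is a `k`-tuple of pairwise vertex-disjoint Up-Right lattice paths `γ i : A i → B i`
inside the grid `{1,…,m} × {1,…,n}`. -/
def IsTuple (m n k : ℕ) (A B : Fin k → ℕ × ℕ) (γ : Fin k → List (ℕ × ℕ)) : Prop :=
  (∀ i, IsPath (A i) (B i) (γ i) ∧ InGrid m n (γ i)) ∧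
  (∀ i j, i ≠ j → ∀ c ∈ γ i, c ∉ γ j)

/-- The multi-path partition function: the sum, over all `k`-tuples of pairwise disjoint
Up-Right lattice paths `γ i : A i → B i` in the grid `{1,…,m} × {1,…,n}`, of the product
of `1/(x_i + y_j)` over all visited cells. -/
def Ftuple (m n k : ℕ) (x y : ℕ → K) (A B : Fin k → ℕ × ℕ) : K :=
  ∑ᶠ γ : {γ : Fin k → List (ℕ × ℕ) // IsTuple m n k A B γ}, ∏ i, pathWeight x y (γ.1 i)

/-! A path reaching `(a, b)` arrives from `(a + 1, b)` or from `(a, b - 1)`, so the row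
`f_a = (F_{a,b})_b` satisfies `(x_a + y_b) f_a(b) - f_a(b - 1) = f_{a+1}(b)` away from the
start. Writing `D_z h (b) = (z + y_b) h(b) - h(b - 1)`, this says `D_{x_a} f_a = f_{a+1}`, and
the start cell gives `D_{x_m} ⋯ D_{x_s} f_s = δ_1`. The coefficients `(z + y_b)(w + y_b)` and
`z + w + y_b + y_{b-1}` of `D_z D_w` are symmetric in `z, w`, so the `D_z` commute; as each
`D_z` is injective, `f_s` is determined by `δ_1` and the multiset `{x_s, …, x_m}`. -/

section RowDiff

variable {R : Type*} [CommRing R]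

def rowDiff (y : ℕ → R) (z : R) : Function.End (ℕ → R) := fun h b =>
  match b with
  | 0 => (z + y 0) * h 0
  | b + 1 => (z + y (b + 1)) * h (b + 1) - h b

theorem rowDiff_commute (y : ℕ → R) (z w : R) : Commute (rowDiff y z) (rowDiff y w) := by
  funext h b
  change rowDiff y z (rowDiff y w h) b = rowDiff y w (rowDiff y z h) b
  rcases b with _ | _ | b <;> simp only [rowDiff] <;> ring

theorem rowDiff_injective [IsDomain R] {y : ℕ → R} {z : R} (hz : ∀ b, z + y b ≠ 0) :
    Function.Injective (rowDiff y z) := by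
  intro h h' e
  funext b
  induction b with
  | zero => exact mul_left_cancel₀ (hz 0) (congrFun e 0)
  | succ b ih =>
    have := congrFun e (b + 1)
    simp only [rowDiff, ih] at this
    exact mul_left_cancel₀ (hz (b + 1)) (sub_left_inj.1 this)

end RowDiff

theorem Function.End.injective_list_prod {α : Type*} {l : List (Function.End α)}
    (hl : ∀ f ∈ l, Function.Injective f) : Function.Injective l.prod := by
  induction l with
  | nil => exact Function.injective_id
  | cons f l ih =>
    rw [List.prod_cons]
    exact (hl f List.mem_cons_self).comp (ih fun g hg => hl g (List.mem_cons_of_mem f hg))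

theorem List.Nodup.map_perm_self {α : Type*} {l : List α} (hl : l.Nodup) {σ : Equiv.Perm α}
    (hσ : ∀ a ∉ l, σ a = a) : (l.map σ).Perm l := by
  refine (List.perm_ext_iff_of_nodup (hl.map σ.injective) hl).2 fun a => ?_
  simp only [List.mem_map]
  constructor
  · rintro ⟨b, hb, rfl⟩
    by_contra ha
    exact ha (by rwa [σ.injective (hσ _ ha)])
  · intro ha
    refine ⟨σ.symm a, ?_, σ.apply_symm_apply a⟩
    by_contra hb
    have hfix := hσ _ hb
    rw [Equiv.apply_symm_apply] at hfix
    exact hb (hfix ▸ ha)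

theorem Set.Finite.setOf_length_eq_forall_mem {α : Type*} {s : Set α} (hs : s.Finite) (n : ℕ) :
    {l : List α | l.length = n ∧ ∀ a ∈ l, a ∈ s}.Finite := by
  have := hs.to_subtype
  refine ((List.finite_length_eq s n).image (List.map Subtype.val)).subset ?_
  rintro l ⟨hl, hls⟩
  exact ⟨l.attachWith _ hls, by simpa using hl, by simp⟩

section Paths

variable {A B : ℕ × ℕ} {p : List (ℕ × ℕ)}

theorem isPath_iff : IsPath A B p ↔ p.IsChain Step ∧ p.head? = some A ∧ p.getLast? = some B :=
  Iff.rfl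

theorem isPath_singleton {a : ℕ × ℕ} : IsPath A B [a] ↔ A = a ∧ B = a := by
  simp [isPath_iff, eq_comm]

theorem isPath_cons_cons {a b : ℕ × ℕ} {l : List (ℕ × ℕ)} :
    IsPath A B (a :: b :: l) ↔ A = a ∧ Step a b ∧ IsPath b B (b :: l) := by
  simp only [isPath_iff, List.isChain_cons_cons, List.head?_cons, eq_comm, Option.some.injEq,
    List.getLast?_cons_cons, true_and]
  tauto

theorem IsPath.length_eq : ∀ {A p}, IsPath A B p → A.1 + B.2 + 1 = B.1 + A.2 + p.length
  | _, [], h => by simp [isPath_iff] at h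
  | _, [a], h => by
    obtain ⟨rfl, rfl⟩ := isPath_singleton.1 h
    simp
  | _, a :: b :: l, h => by
    obtain ⟨rfl, hab, h⟩ := isPath_cons_cons.1 h
    have := h.length_eq
    simp only [Step, List.length_cons] at hab this ⊢
    omega

theorem IsPath.mem_bounds : ∀ {A p}, IsPath A B p → ∀ c ∈ p,
    B.1 ≤ c.1 ∧ c.1 ≤ A.1 ∧ A.2 ≤ c.2 ∧ c.2 ≤ B.2
  | _, [], h => by simp [isPath_iff] at h
  | _, [a], h => by
    obtain ⟨rfl, rfl⟩ := isPath_singleton.1 h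
    simp
  | _, a :: b :: l, h => by
    obtain ⟨rfl, hab, h⟩ := isPath_cons_cons.1 h
    have hb := h.mem_bounds
    have hab' := hb b List.mem_cons_self
    simp only [Step] at hab
    rintro c (_ | ⟨_, hc⟩)
    · omega
    · have := hb c hc
      omega

def paths (A B : ℕ × ℕ) : Set (List (ℕ × ℕ)) := {p | IsPath A B p}

theorem paths_finite (A B : ℕ × ℕ) : (paths A B).Finite := by
  refine ((((Set.finite_Icc B.1 A.1).prod (Set.finite_Icc A.2 B.2))).setOf_length_eq_forall_mem
    (A.1 + B.2 + 1 - B.1 - A.2)).subset fun p hp => ⟨?_, fun c hc => ?_⟩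
  · have := hp.length_eq
    omega
  · have := hp.mem_bounds c hc
    exact ⟨⟨this.1, this.2.1⟩, this.2.2⟩

theorem paths_self (A : ℕ × ℕ) : paths A A = {[A]} := by
  ext p
  refine ⟨fun hp => ?_, ?_⟩
  · obtain ⟨a, rfl⟩ : ∃ a, p = [a] := List.length_eq_one_iff.1 (by have := hp.length_eq; omega)
    simpa [paths, isPath_singleton, eq_comm] using hp
  · rintro rfl
    simp [paths, isPath_singleton]

theorem paths_eq_empty (h : A.1 < B.1 ∨ B.2 < A.2) : paths A B = ∅ := by
  refine Set.eq_empty_of_forall_notMem fun p hp => ?_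
  obtain ⟨c, hc⟩ := List.exists_mem_of_ne_nil p (by rintro rfl; simp [paths, isPath_iff] at hp)
  have := hp.mem_bounds c hc
  omega

theorem isPath_append_singleton_iff {q : List (ℕ × ℕ)} (hq : q ≠ []) :
    IsPath A B (q ++ [B]) ↔ IsPath A (q.getLast hq) q ∧ Step (q.getLast hq) B := by
  simp only [isPath_iff, List.isChain_append, List.IsChain.singleton,
    List.getLast?_eq_some_getLast hq, Option.mem_def, Option.some.injEq, List.head?_cons,
    forall_eq', true_and, List.head?_append_of_ne_nil q hq, List.getLast?_append,
    List.getLast?_singleton, Option.or_some, Option.getD_some, and_true]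
  tauto

theorem mem_paths_iff_of_ne (h : B ≠ A) :
    p ∈ paths A B ↔ ∃ C, Step C B ∧ ∃ q ∈ paths A C, q ++ [B] = p := by
  change IsPath A B p ↔ _
  constructor
  · intro hp
    have hp0 : p ≠ [] := by rintro rfl; simp [isPath_iff] at hp
    have hlast : p.getLast hp0 = B := by
      simpa [List.getLast?_eq_some_getLast hp0] using hp.2.2
    have hq : p.dropLast ≠ [] := by
      intro hq
      have hpB : p = [B] := by rw [← List.dropLast_append_getLast hp0, hq, hlast]; rfl
      exact h (isPath_singleton.1 (hpB ▸ hp)).1.symm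
    have hsplit : p.dropLast ++ [B] = p := hlast ▸ List.dropLast_append_getLast hp0
    rw [← hsplit, isPath_append_singleton_iff hq] at hp
    exact ⟨_, hp.2, _, hp.1, hsplit⟩
  · rintro ⟨C, hCB, q, hq, rfl⟩
    have hq0 : q ≠ [] := by rintro rfl; simp [paths, isPath_iff] at hq
    have hC : q.getLast hq0 = C := by
      simpa [List.getLast?_eq_some_getLast hq0] using hq.2.2
    exact (isPath_append_singleton_iff hq0).2 ⟨hC ▸ hq, hC ▸ hCB⟩

theorem paths_zero_eq_image {a : ℕ} (h : (a, 0) ≠ A) :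
    paths A (a, 0) = (· ++ [(a, 0)]) '' paths A (a + 1, 0) := by
  ext p
  rw [mem_paths_iff_of_ne h]
  simp [Step]

theorem paths_succ_eq_image {a b : ℕ} (h : (a, b + 1) ≠ A) :
    paths A (a, b + 1) = (· ++ [(a, b + 1)]) '' (paths A (a + 1, b + 1) ∪ paths A (a, b)) := by
  ext p
  rw [mem_paths_iff_of_ne h]
  simp only [Step, Prod.exists, Set.mem_image, Set.mem_union]
  aesop

end Paths

section PathSum

variable (x y : ℕ → K) {A : ℕ × ℕ}

def pathSum (A B : ℕ × ℕ) : K := ∑ᶠ p ∈ paths A B, pathWeight x y p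

theorem finsum_image_append_singleton (s : Set (List (ℕ × ℕ))) (B : ℕ × ℕ) :
    ∑ᶠ p ∈ (· ++ [B]) '' s, pathWeight x y p =
      (∑ᶠ p ∈ s, pathWeight x y p) * (x B.1 + y B.2)⁻¹ := by
  rw [finsum_mem_image (List.append_left_injective [B]).injOn, finsum_mem_mul]
  simp [pathWeight]

theorem pathSum_self : pathSum x y A A = (x A.1 + y A.2)⁻¹ := by
  simp [pathSum, paths_self, pathWeight]

theorem pathSum_eq_zero {B : ℕ × ℕ} (h : A.1 < B.1 ∨ B.2 < A.2) : pathSum x y A B = 0 := by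
  simp [pathSum, paths_eq_empty h]

theorem pathSum_zero {a : ℕ} (h : (a, 0) ≠ A) :
    pathSum x y A (a, 0) = pathSum x y A (a + 1, 0) * (x a + y 0)⁻¹ := by
  rw [pathSum, paths_zero_eq_image h, finsum_image_append_singleton, pathSum]

theorem pathSum_succ {a b : ℕ} (h : (a, b + 1) ≠ A) :
    pathSum x y A (a, b + 1) =
      (pathSum x y A (a + 1, b + 1) + pathSum x y A (a, b)) * (x a + y (b + 1))⁻¹ := by
  have hdisj : Disjoint (paths A (a + 1, b + 1)) (paths A (a, b)) := by
    refine Set.disjoint_left.2 fun p hp hp' => ?_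
    have := hp.2.2.symm.trans hp'.2.2
    simp at this
  rw [pathSum, paths_succ_eq_image h, finsum_image_append_singleton,
    finsum_mem_union hdisj (paths_finite _ _) (paths_finite _ _), pathSum, pathSum]

def pathRow (A : ℕ × ℕ) (a : ℕ) : ℕ → K := fun b => pathSum x y A (a, b)

variable {x y}

theorem rowDiff_pathRow_of_lt {a : ℕ} (ha : a < A.1) (hxy : ∀ b, x a + y b ≠ 0) :
    rowDiff y (x a) (pathRow x y A a) = pathRow x y A (a + 1) := by
  have hne : ∀ b, (a, b) ≠ A := fun b h => ha.ne (congrArg Prod.fst h)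
  funext b
  cases b with
  | zero =>
    simp only [rowDiff, pathRow, pathSum_zero x y (hne 0)]
    field_simp [hxy 0]
  | succ b =>
    simp only [rowDiff, pathRow, pathSum_succ x y (hne (b + 1))]
    field_simp [hxy (b + 1)]
    ring

theorem rowDiff_pathRow_self (hxy : ∀ b, x A.1 + y b ≠ 0) :
    rowDiff y (x A.1) (pathRow x y A A.1) = Pi.single A.2 1 := by
  obtain ⟨a, c⟩ := A
  funext b
  have hleft : ∀ b < c, pathSum x y (a, c) (a, b) = 0 := fun b hb => pathSum_eq_zero x y (.inr hb)
  cases b with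
  | zero =>
    rcases Nat.eq_zero_or_pos c with rfl | hc
    · simp [rowDiff, pathRow, pathSum_self, hxy 0]
    · simp [rowDiff, pathRow, hleft 0 hc, hc.ne]
  | succ b =>
    rcases lt_trichotomy (b + 1) c with hb | rfl | hb
    · simp [rowDiff, pathRow, hleft _ hb, hleft _ (Nat.lt_of_succ_lt hb), hb.ne]
    · simp [rowDiff, pathRow, pathSum_self, hxy (b + 1), hleft b (Nat.lt_succ_self b)]
    · have hbelow : pathSum x y (a, c) (a + 1, b + 1) = 0 := pathSum_eq_zero x y (.inl (by simp))
      have hne : (a, b + 1) ≠ (a, c) := by simp [hb.ne']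
      simp only [rowDiff, pathRow, pathSum_succ x y hne, hbelow, zero_add]
      field_simp [hxy (b + 1)]
      simp [hb.ne']

end PathSum

section Symmetry

variable {x y : ℕ → K} {A : ℕ × ℕ}

theorem rowDiff_prod_pathRow (hxy : ∀ i j, x i + y j ≠ 0) {s : ℕ} (hs : s ≤ A.1) :
    ((List.range' s (A.1 + 1 - s)).map fun i => rowDiff y (x i)).reverse.prod (pathRow x y A s) =
      Pi.single A.2 1 := by
  induction hs using Nat.decreasingInduction with
  | self => simpa using rowDiff_pathRow_self (hxy A.1)
  | of_succ s hs ih =>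
    rw [show A.1 + 1 - s = A.1 + 1 - (s + 1) + 1 by omega, List.range'_succ, List.map_cons,
      List.reverse_cons, List.prod_append, List.prod_singleton]
    exact (congrArg _ (rowDiff_pathRow_of_lt hs (hxy s))).trans ih

theorem pathRow_comp_perm (hxy : ∀ i j, x i + y j ≠ 0) {s : ℕ} (hs : s ≤ A.1) {σ : Equiv.Perm ℕ}
    (hσ : ∀ i, i ∉ Finset.Icc s A.1 → σ i = i) : pathRow (x ∘ σ) y A s = pathRow x y A s := by
  set rows := List.range' s (A.1 + 1 - s)
  have hnodup : rows.Nodup := List.nodup_range'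
  have hrows : (rows.map σ).Perm rows := hnodup.map_perm_self fun i hi => hσ i <| by
    simp only [rows, List.mem_range'_1, mem_Icc] at hi ⊢
    omega
  have hprod : (rows.map fun i => rowDiff y ((x ∘ σ) i)).reverse.prod =
      (rows.map fun i => rowDiff y (x i)).reverse.prod := by
    refine List.Perm.prod_eq' ?_ (List.pairwise_of_forall_mem_list fun f hf g hg => ?_)
    · rw [show rows.map (fun i => rowDiff y ((x ∘ σ) i)) = (rows.map σ).map fun i => rowDiff y (x i)
        by simp [Function.comp_def]]
      exact (List.reverse_perm _).trans ((hrows.map _).trans (List.reverse_perm _).symm)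
    · obtain ⟨i, -, rfl⟩ := List.mem_map.1 (List.mem_reverse.1 hf)
      obtain ⟨j, -, rfl⟩ := List.mem_map.1 (List.mem_reverse.1 hg)
      exact rowDiff_commute y _ _
  refine Function.End.injective_list_prod (l := (rows.map fun i => rowDiff y (x i)).reverse)
    (fun f hf => ?_) ?_
  · obtain ⟨i, -, rfl⟩ := List.mem_map.1 (List.mem_reverse.1 hf)
    exact rowDiff_injective (hxy i)
  · rw [rowDiff_prod_pathRow hxy hs, ← hprod]
    exact rowDiff_prod_pathRow (x := x ∘ σ) (fun i j => hxy (σ i) j) hs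

end Symmetry

theorem F1_eq_pathSum {m n : ℕ} (x y : ℕ → K) {A B : ℕ × ℕ} (hA1 : A.1 ≤ m) (hA2 : 1 ≤ A.2)
    (hB1 : 1 ≤ B.1) (hB2 : B.2 ≤ n) : F1 m n x y A B = pathSum x y A B := by
  have hgrid : {p | IsPath A B p ∧ InGrid m n p} = paths A B := by
    ext p
    refine ⟨And.left, fun hp => ⟨hp, fun c hc => ?_⟩⟩
    have := hp.mem_bounds c hc
    omega
  rw [F1, pathSum, ← hgrid]
  exact finsum_set_coe_eq_finsum_mem _

theorem X_add_Y_ne_zero (i j : ℕ) : X i + Y j ≠ 0 := by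
  rw [X, Y, ← map_add, map_ne_zero_iff _ (IsFractionRing.injective _ K)]
  intro h
  simpa using congrArg (MvPolynomial.eval fun _ => (1 : ℚ)) h

theorem stmt8_general (m n s k : ℕ) (hs : 1 ≤ s) (hsm : s ≤ m) (hkn : k ≤ n)
    (σ : Equiv.Perm ℕ) (hσ : ∀ i, i ∉ Finset.Icc s m → σ i = i) :
    F1 m n (fun i => X (σ i)) Y (m, 1) (s, k) = F1 m n X Y (m, 1) (s, k) := by
  rw [F1_eq_pathSum (A := (m, 1)) (B := (s, k)) _ _ le_rfl le_rfl hs hkn,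
    F1_eq_pathSum (A := (m, 1)) (B := (s, k)) _ _ le_rfl le_rfl hs hkn]
  exact congrFun (pathRow_comp_perm X_add_Y_ne_zero hsm hσ) k

/-- The weighted sum `F_{s,k}` over Up-Right lattice paths from `(m,1)` to `(s,k)` in the
grid `{1,…,m} × {1,…,n}` is a symmetric function of the variables `x_s, x_{s+1}, …, x_m`:
it is unchanged under any permutation of the variable indices fixing everything outside
`{s,…,m}`. -/
theorem stmt8 (m n s k : ℕ) (hs : 1 ≤ s) (hsm : s ≤ m) (hk : 1 ≤ k) (hkn : k ≤ n)
    (σ : Equiv.Perm ℕ) (hσ : ∀ i, i ∉ Finset.Icc s m → σ i = i) :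
    F1 m n (fun i => X (σ i)) Y (m, 1) (s, k) = F1 m n X Y (m, 1) (s, k) :=
  stmt8_general m n s k hs hsm hkn σ hσ
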